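/- arXiv:1511.08977 — 5 statements merged into one kernel-verified Lean document; each statement's English description precedes it below -/
import Mathlib

section
/- Let y ∈ R^n be nonnegative and 0 ≤ m ≤ n. Define x* as follows: with y arranged increasingly, let k be the smallest index in S = { j : Σ_{i=1}^{j} y_{[i]} ≤ (j-m) y_{[j+1]}, m ≤ j < n } ∪ {n}; set x*_{[i]} = 0 for i ≤ m, x*_{[i]} = (1/(k-m)) Σ_{i'=1}^{k} y_{[i']} for m < i ≤ k, and x*_{[i]} = y_{[i]} for i > k. Then for any nonnegative vector x ∈ R^n containing at least m zero entries, if x majorizes y then x majorizes x*. That is, x* is the minimum (in the majorization order) vector with m zeros that majorizes y. -/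
open Finset

/-- Sum of the `k` smallest entries of `x` (`x` rearranged increasingly via `Tuple.sort`). -/
noncomputable def psum {n : ℕ} (x : Fin n → ℝ) (k : ℕ) : ℝ :=
  ∑ i ∈ Finset.univ.filter (fun i : Fin n => (i : ℕ) < k), (x ∘ Tuple.sort x) i

/-- `x` majorizes `y`: partial sums of the `k` smallest entries of `x` are at most those of
`y` for every `k`, and the total sums are equal. -/
noncomputable def Majorizes {n : ℕ} (x y : Fin n → ℝ) : Prop :=
  (∀ k : ℕ, psum x k ≤ psum y k) ∧ (∑ i, x i = ∑ i, y i)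

/-- Membership in the index set `S = {j : m ≤ j < n, ∑_{i≤j} y_[i] ≤ (j-m) y_[j+1]} ∪ {n}`. -/
noncomputable def inS (m : ℕ) {n : ℕ} (y : Fin n → ℝ) (j : ℕ) : Prop :=
  (∃ hj : j < n, m ≤ j ∧ psum y j ≤ ((j : ℝ) - (m : ℝ)) * y ⟨j, hj⟩) ∨ j = n

/-- The candidate smallest vector with `m` zeros majorizing `y`. -/
noncomputable def xstar (m k : ℕ) {n : ℕ} (y : Fin n → ℝ) : Fin n → ℝ := fun i =>
  if (i : ℕ) < m then 0
  else if (i : ℕ) < k then psum y k / ((k : ℝ) - (m : ℝ))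
  else y i

namespace MajAux

variable {n : ℕ}

/-- Sum of the first `t` entries (no sorting). -/
noncomputable def lsum (f : Fin n → ℝ) (t : ℕ) : ℝ :=
  ∑ i ∈ Finset.univ.filter (fun i : Fin n => (i : ℕ) < t), f i

/-- The block of indices in `[a, b)`. -/
def M (n a b : ℕ) : Finset (Fin n) :=
  Finset.univ.filter (fun i : Fin n => a ≤ (i : ℕ) ∧ (i : ℕ) < b)

lemma psum_eq_lsum {f : Fin n → ℝ} (hf : Monotone f) (t : ℕ) : psum f t = lsum f t := by
  unfold psum lsum
  rw [Tuple.sort_eq_refl_iff_monotone.2 hf]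
  simp

lemma card_filter_lt (t : ℕ) :
    (Finset.univ.filter (fun i : Fin n => (i : ℕ) < t)).card = min t n := by
  rw [← Finset.card_range (min t n)]
  apply Finset.card_bij (fun (i : Fin n) _ => (i : ℕ))
  · intro a ha
    simp only [Finset.mem_filter, Finset.mem_univ, true_and] at ha
    simp only [Finset.mem_range]
    omega
  · intro a ha b hb h
    exact Fin.val_injective h
  · intro b hb
    simp only [Finset.mem_range] at hb
    exact ⟨⟨b, by omega⟩, by simp; omega, rfl⟩

lemma card_M {a b : ℕ} (hab : a ≤ b) (hb : b ≤ n) : (M n a b).card = b - a := by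
  rw [← Nat.card_Ico a b]
  apply Finset.card_bij (fun (i : Fin n) _ => (i : ℕ))
  · intro i hi
    simp only [M, Finset.mem_filter, Finset.mem_univ, true_and] at hi
    simp only [Finset.mem_Ico]
    omega
  · intro i hi j hj h
    exact Fin.val_injective h
  · intro c hc
    simp only [Finset.mem_Ico] at hc
    exact ⟨⟨c, by omega⟩, by simp [M]; omega, rfl⟩

lemma lsum_split (f : Fin n → ℝ) {a b : ℕ} (hab : a ≤ b) :
    lsum f b = lsum f a + ∑ i ∈ M n a b, f i := by
  unfold lsum
  rw [← Finset.sum_union (by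
    rw [Finset.disjoint_left]
    intro i hi hi'
    simp only [Finset.mem_filter, Finset.mem_univ, true_and] at hi
    simp only [M, Finset.mem_filter, Finset.mem_univ, true_and] at hi'
    omega)]
  congr 1
  ext i
  simp only [Finset.mem_filter, Finset.mem_union, Finset.mem_univ, true_and, M]
  omega

lemma lsum_univ (f : Fin n → ℝ) {t : ℕ} (ht : n ≤ t) : lsum f t = ∑ i, f i := by
  unfold lsum
  congr 1
  apply Finset.filter_true_of_mem
  intro i _
  omega

lemma cheb {g : Fin n → ℝ} (hg : Monotone g) {a b c : ℕ} (hab : a ≤ b) (hbc : b ≤ c)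
    (hc : c ≤ n) :
    ((c : ℝ) - b) * ∑ i ∈ M n a b, g i ≤ ((b : ℝ) - a) * ∑ i ∈ M n b c, g i := by
  have key : ∀ i ∈ M n a b, ∀ j ∈ M n b c, g i ≤ g j := by
    intro i hi j hj
    simp only [M, Finset.mem_filter, Finset.mem_univ, true_and] at hi hj
    exact hg (Fin.le_def.mpr (by omega))
  have h : ∑ _j ∈ M n b c, ∑ i ∈ M n a b, g i ≤ ∑ j ∈ M n b c, ∑ _i ∈ M n a b, g j :=
    Finset.sum_le_sum fun j hj => Finset.sum_le_sum fun i hi => key i hi j hj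
  simp only [Finset.sum_const, nsmul_eq_mul, ← Finset.sum_mul, ← Finset.mul_sum] at h
  rw [card_M hbc hc, card_M hab (hbc.trans hc)] at h
  rw [show ((c : ℝ) - b) = ((c - b : ℕ) : ℝ) by push_cast [hbc]; ring,
      show ((b : ℝ) - a) = ((b - a : ℕ) : ℝ) by push_cast [hab]; ring]
  exact h

/-- Chebyshev consequence: `(c-a) * S_{[a,b)} ≤ (b-a) * S_{[a,c)}`. -/
lemma cheb2 {g : Fin n → ℝ} (hg : Monotone g) {a b c : ℕ} (hab : a ≤ b) (hbc : b ≤ c)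
    (hc : c ≤ n) :
    ((c : ℝ) - a) * ∑ i ∈ M n a b, g i ≤ ((b : ℝ) - a) * ∑ i ∈ M n a c, g i := by
  have hsplit : ∑ i ∈ M n a c, g i = ∑ i ∈ M n a b, g i + ∑ i ∈ M n b c, g i := by
    have h1 := lsum_split g (hab.trans hbc)
    have h2 := lsum_split g hab
    have h3 := lsum_split g hbc
    -- lsum g c = lsum g a + Sac ; lsum g b = lsum g a + Sab ; lsum g c = lsum g b + Sbc
    linarith
  have h := cheb hg hab hbc hc
  rw [hsplit]
  nlinarith [h]

end MajAux

open MajAux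

/-- `x*` is the minimum vector with `m` zeros majorizing `y`: any nonnegative vector `x`
with at least `m` zero entries that majorizes `y` also majorizes `x*`. -/
theorem majorizes_xstar_of_majorizes
    {n m : ℕ} (hm : m ≤ n) (y : Fin n → ℝ) (hy : Monotone y) (hy0 : ∀ i, 0 ≤ y i)
    (k : ℕ) (hkS : inS m y k) (hkmin : ∀ j, inS m y j → k ≤ j)
    (x : Fin n → ℝ) (hx0 : ∀ i, 0 ≤ x i)
    (hzeros : m ≤ (Finset.univ.filter (fun i : Fin n => x i = 0)).card)
    (hmaj : Majorizes x y) :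
    Majorizes x (xstar m k y) := by
  obtain ⟨hple, hsum⟩ := hmaj
  set σ := Tuple.sort x with hσ
  set g : Fin n → ℝ := x ∘ σ with hgdef
  set z : Fin n → ℝ := xstar m k y with hzdef
  have hgmono : Monotone g := Tuple.monotone_sort x
  have hpx : ∀ t, psum x t = lsum g t := fun t => rfl
  have hg0 : ∀ i, 0 ≤ g i := fun i => hx0 _
  have hmk : m ≤ k := by
    rcases hkS with ⟨hj, hmj, _⟩ | rfl
    · exact hmj
    · exact hm
  have hkn : k ≤ n := by
    rcases hkS with ⟨hj, _, _⟩ | rfl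
    · omega
    · exact le_rfl
  have hyps : ∀ t, psum y t = lsum y t := psum_eq_lsum hy
  have hyl_nonneg : ∀ t, 0 ≤ lsum y t := fun t =>
    Finset.sum_nonneg fun i _ => hy0 i
  -- number of zeros of g
  have hzg : m ≤ (Finset.univ.filter (fun i : Fin n => g i = 0)).card := by
    refine le_trans hzeros (le_of_eq ?_)
    apply Finset.card_bij (fun (i : Fin n) _ => σ.symm i)
    · intro a ha
      simp only [Finset.mem_filter, Finset.mem_univ, true_and] at ha ⊢
      simpa [hgdef] using ha
    · intro a _ b _ h
      exact σ.symm.injective h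
    · intro b hb
      simp only [Finset.mem_filter, Finset.mem_univ, true_and] at hb
      exact ⟨σ b, by simpa [hgdef] using hb, by simp⟩
  -- g vanishes on the first m coordinates
  have hgz : ∀ i : Fin n, (i : ℕ) < m → g i = 0 := by
    intro i hi
    have hex : ∃ j : Fin n, g j = 0 ∧ (i : ℕ) ≤ (j : ℕ) := by
      by_contra hcon
      push_neg at hcon
      have hsub : (Finset.univ.filter (fun j : Fin n => g j = 0)) ⊆
          (Finset.univ.filter (fun j : Fin n => (j : ℕ) < (i : ℕ))) := by
        intro j hj
        simp only [Finset.mem_filter, Finset.mem_univ, true_and] at hj ⊢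
        have := hcon j hj
        omega
      have hcard := Finset.card_le_card hsub
      rw [card_filter_lt] at hcard
      omega
    obtain ⟨j, hj0, hij⟩ := hex
    have h1 : g i ≤ g j := hgmono (Fin.le_def.mpr hij)
    have h2 : 0 ≤ g i := hg0 i
    linarith [hj0 ▸ h1]
  have hlgm : lsum g m = 0 := by
    apply Finset.sum_eq_zero
    intro i hi
    simp only [Finset.mem_filter, Finset.mem_univ, true_and] at hi
    exact hgz i hi
  have htot : lsum g n = ∑ i, x i := by
    rw [lsum_univ g le_rfl]
    exact Equiv.sum_comp σ x
  -- k = m corner case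
  have hpk0 : m = k → psum y k = 0 := by
    intro hmk'
    rcases hkS with ⟨hj, _, hle⟩ | hkeq
    · have hle' : psum y k ≤ 0 := by
        have : ((k : ℝ) - (m : ℝ)) = 0 := by rw [hmk']; ring
        rw [this, zero_mul] at hle
        exact hle
      have := hyl_nonneg k
      rw [hyps k]
      linarith [(hyps k) ▸ hle']
    · -- k = n, m = n : all of x is zero
      have hxz : ∀ i : Fin n, g i = 0 := fun i => hgz i (by have := i.isLt; omega)
      have hx0' : ∑ i, x i = 0 := by
        rw [← htot, lsum_univ g le_rfl]
        exact Finset.sum_eq_zero fun i _ => hxz i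
      rw [hyps k, hkeq, lsum_univ y le_rfl, ← hsum, hx0']
  -- average value
  set avg : ℝ := psum y k / ((k : ℝ) - (m : ℝ)) with havgdef
  have havg0 : 0 ≤ avg := by
    apply div_nonneg
    · rw [hyps k]; exact hyl_nonneg k
    · have : (m : ℝ) ≤ (k : ℝ) := by exact_mod_cast hmk
      linarith
  have havg_le : ∀ j : Fin n, k ≤ (j : ℕ) → avg ≤ y j := by
    intro j hj
    rcases eq_or_lt_of_le hmk with hmk' | hmk'
    · have : avg = 0 := by
        rw [havgdef, hpk0 hmk', zero_div]
      rw [this]; exact hy0 j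
    · have hkltn : k < n := lt_of_le_of_lt hj j.isLt
      rcases hkS with ⟨hj', _, hle⟩ | rfl
      · have hyk : y ⟨k, hj'⟩ ≤ y j := hy (Fin.le_def.mpr hj)
        have hkm : (0 : ℝ) < (k : ℝ) - (m : ℝ) := by
          have : (m : ℝ) < (k : ℝ) := by exact_mod_cast hmk'
          linarith
        rw [havgdef, div_le_iff₀ hkm]
        calc psum y k ≤ ((k : ℝ) - (m : ℝ)) * y ⟨k, hj'⟩ := hle
          _ ≤ y j * ((k : ℝ) - (m : ℝ)) := by nlinarith
      · omega
  -- xstar values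
  have hz_lo : ∀ i : Fin n, (i : ℕ) < m → z i = 0 := by
    intro i hi
    simp only [hzdef, xstar, if_pos hi]
  have hz_mid : ∀ i : Fin n, m ≤ (i : ℕ) → (i : ℕ) < k → z i = avg := by
    intro i h1 h2
    simp only [hzdef, xstar, havgdef]
    rw [if_neg (by omega), if_pos h2]
  have hz_hi : ∀ i : Fin n, k ≤ (i : ℕ) → z i = y i := by
    intro i h1
    simp only [hzdef, xstar]
    rw [if_neg (by omega), if_neg (by omega)]
  -- monotonicity of xstar
  have hmono_z : Monotone z := by
    intro i j hij
    have hij' : (i : ℕ) ≤ (j : ℕ) := hij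
    rcases lt_or_ge (i : ℕ) m with h1 | h1
    · rw [hz_lo i h1]
      rcases lt_or_ge (j : ℕ) m with h2 | h2
      · rw [hz_lo j h2]
      · rcases lt_or_ge (j : ℕ) k with h3 | h3
        · rw [hz_mid j h2 h3]; exact havg0
        · rw [hz_hi j h3]; exact hy0 j
    · rcases lt_or_ge (i : ℕ) k with h2 | h2
      · rw [hz_mid i h1 h2]
        rcases lt_or_ge (j : ℕ) k with h3 | h3
        · rw [hz_mid j (by omega) h3]
        · rw [hz_hi j h3]; exact havg_le j h3
      · rw [hz_hi i h2, hz_hi j (by omega)]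
        exact hy hij
  have hlzm : lsum z m = 0 := by
    apply Finset.sum_eq_zero
    intro i hi
    simp only [Finset.mem_filter, Finset.mem_univ, true_and] at hi
    exact hz_lo i hi
  -- middle block sum of z
  have hmidsum : ∀ K, m ≤ K → K ≤ k → K ≤ n →
      (∑ i ∈ M n m K, z i) = ((K : ℝ) - (m : ℝ)) * avg := by
    intro K h1 h2 h3
    rw [Finset.sum_congr rfl (fun i hi => by
      simp only [M, Finset.mem_filter, Finset.mem_univ, true_and] at hi
      exact hz_mid i hi.1 (by omega))]
    rw [Finset.sum_const, card_M h1 h3, nsmul_eq_mul]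
    congr 1
    push_cast [h1]
    ring
  have hlzk : lsum z k = psum y k := by
    rw [lsum_split z hmk, hlzm, zero_add, hmidsum k hmk le_rfl hkn]
    rcases eq_or_lt_of_le hmk with hmk' | hmk'
    · rw [hpk0 hmk', ← hmk']
      simp
    · have hne : ((k : ℝ) - (m : ℝ)) ≠ 0 := by
        have : (m : ℝ) < (k : ℝ) := by exact_mod_cast hmk'
        linarith
      rw [havgdef, mul_div_assoc']
      exact mul_div_cancel_left₀ _ hne
  have hlz_eq_y : ∀ K, k ≤ K → lsum z K = lsum y K := by
    intro K hK
    rw [lsum_split z hK, lsum_split y hK, hlzk, hyps k]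
    congr 1
    apply Finset.sum_congr rfl
    intro i hi
    simp only [M, Finset.mem_filter, Finset.mem_univ, true_and] at hi
    exact hz_hi i hi.1
  constructor
  · intro K
    rw [hpx K, psum_eq_lsum hmono_z K]
    rcases le_or_gt K m with hKm | hmK
    · have h1 : lsum g K = 0 := Finset.sum_eq_zero fun i hi => by
        simp only [Finset.mem_filter, Finset.mem_univ, true_and] at hi
        exact hgz i (by omega)
      have h2 : lsum z K = 0 := Finset.sum_eq_zero fun i hi => by
        simp only [Finset.mem_filter, Finset.mem_univ, true_and] at hi
        exact hz_lo i (by omega)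
      rw [h1, h2]
    · rcases le_or_gt K k with hKk | hkK
      · -- m < K ≤ k ≤ n
        have hKn : K ≤ n := hKk.trans hkn
        have hmltk : m < k := lt_of_lt_of_le hmK hKk
        have hkmpos : (0 : ℝ) < (k : ℝ) - (m : ℝ) := by
          have : (m : ℝ) < (k : ℝ) := by exact_mod_cast hmltk
          linarith
        have hKmnn : (0 : ℝ) ≤ (K : ℝ) - (m : ℝ) := by
          have : (m : ℝ) ≤ (K : ℝ) := by exact_mod_cast hmK.le
          linarith
        have hch := cheb2 hgmono hmK.le hKk hkn
        have hgK : lsum g K = ∑ i ∈ M n m K, g i := by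
          rw [lsum_split g hmK.le, hlgm, zero_add]
        have hgk : lsum g k = ∑ i ∈ M n m k, g i := by
          rw [lsum_split g hmk, hlgm, zero_add]
        have hxky : lsum g k ≤ lsum y k := by
          rw [← hpx k, ← hyps k]; exact hple k
        have hzK : lsum z K = ((K : ℝ) - (m : ℝ)) * avg := by
          rw [lsum_split z hmK.le, hlzm, zero_add, hmidsum K hmK.le hKk hKn]
        rw [hzK, havgdef, hyps k, hgK, mul_div_assoc', le_div_iff₀ hkmpos]
        calc (∑ i ∈ M n m K, g i) * ((k : ℝ) - (m : ℝ))
            = ((k : ℝ) - (m : ℝ)) * ∑ i ∈ M n m K, g i := by ring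
          _ ≤ ((K : ℝ) - (m : ℝ)) * ∑ i ∈ M n m k, g i := hch
          _ = ((K : ℝ) - (m : ℝ)) * lsum g k := by rw [hgk]
          _ ≤ ((K : ℝ) - (m : ℝ)) * lsum y k := by nlinarith
      · -- K > k
        rw [hlz_eq_y K hkK.le, ← hyps K, ← hpx K]
        exact hple K
  · have h1 : ∑ i, z i = lsum z n := (lsum_univ z le_rfl).symm
    rw [hsum, h1, hlz_eq_y n hkn, lsum_univ y le_rfl]
end

section
/- For fixed α ∈ (0,1), T > 0, K ≥ 1, the function γ ↦ τ(γ) = (α γ γ' ρ d^4 T) / (ρ d^2 (γ' K + α γ T) + 1), where γ' = (1 - αγ)/(1 - α), attains its maximum over γ ∈ [0, 1/α] at γ* = 1/(α(1 + √(1 - μ₁))) where μ₁ = ρ d^2 (K - (1-α)T) / (1 - α + ρ d^2 K), provided K ≤ αT (so that μ₁ ≤ 1). -/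
/-- Effective SNR factor `τ(γ)` in the case `K ≤ αT`, with `γ' = (1-αγ)/(1-α)`. -/
noncomputable def tauLow (α T K ρ d γ : ℝ) : ℝ :=
  (α * γ * ((1 - α * γ) / (1 - α)) * ρ * d ^ 4 * T) /
    (ρ * d ^ 2 * (((1 - α * γ) / (1 - α)) * K + α * γ * T) + 1)

/-- Optimal training power coefficient for `K ≤ αT`. -/
noncomputable def gammaStarLow (α T K ρ d : ℝ) : ℝ :=
  1 / (α * (1 + Real.sqrt (1 - ρ * d ^ 2 * (K - (1 - α) * T) / (1 - α + ρ * d ^ 2 * K))))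

/-!
With `x = αγ ∈ [0, 1]`, clearing the factor `1 - α` writes the denominator of `τ` as
`A (1 - x) + B x` with `A = 1 - α + ρd²K` and `B = (1 - α)(1 + ρd²T)`, and `1 - μ₁ = B / A`.
So `τ(γ)` is a nonnegative multiple of `x (1 - x) / ((1 - x) + s² x)` with `s = √(1 - μ₁)`, and
`(1 - x) + s² x - (1 + s)² x (1 - x) = (1 - x - s x)²` shows that this profile is at most
`1 / (1 + s)²`, with equality at `x = 1 / (1 + s)`, i.e. at `γ = γ*`.
-/

open Set

theorem mul_one_sub_div_le_inv_one_add_sq {s x : ℝ} (hs : 0 ≤ s) (hx0 : 0 ≤ x) (hx1 : x ≤ 1) :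
    x * (1 - x) / (1 - x + s ^ 2 * x) ≤ 1 / (1 + s) ^ 2 := by
  have hden : 0 ≤ 1 - x + s ^ 2 * x := by nlinarith [sq_nonneg s]
  refine div_le_of_le_mul₀ hden (by positivity) ?_
  rw [one_div_mul_eq_div, le_div_iff₀ (by positivity)]
  nlinarith [sq_nonneg (1 - x - s * x)]

theorem mul_one_sub_div_at_inv_one_add {s : ℝ} (hs : 0 < s) :
    1 / (1 + s) * (1 - 1 / (1 + s)) / (1 - 1 / (1 + s) + s ^ 2 * (1 / (1 + s))) =
      1 / (1 + s) ^ 2 := by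
  have h1s : 1 - 1 / (1 + s) = s / (1 + s) := by field_simp; ring
  rw [h1s, div_eq_div_iff (by positivity) (by positivity)]
  field_simp

theorem isMaxOn_mul_one_sub_div {s : ℝ} (hs : 0 < s) :
    IsMaxOn (fun x : ℝ => x * (1 - x) / (1 - x + s ^ 2 * x)) (Icc 0 1) (1 / (1 + s)) := by
  intro x hx
  simp only [mem_ofPred_eq, mul_one_sub_div_at_inv_one_add hs]
  exact mul_one_sub_div_le_inv_one_add_sq hs.le hx.1 hx.2

noncomputable def muLow (α T K ρ d : ℝ) : ℝ :=
  ρ * d ^ 2 * (K - (1 - α) * T) / (1 - α + ρ * d ^ 2 * K)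

theorem gammaStarLow_eq (α T K ρ d : ℝ) :
    gammaStarLow α T K ρ d = 1 / (α * (1 + √(1 - muLow α T K ρ d))) :=
  rfl

theorem one_sub_muLow {α T K ρ d : ℝ} (hA : 1 - α + ρ * d ^ 2 * K ≠ 0) :
    1 - muLow α T K ρ d = (1 - α) * (1 + ρ * d ^ 2 * T) / (1 - α + ρ * d ^ 2 * K) := by
  rw [muLow]
  field_simp
  ring

theorem tauLow_eq {α T K ρ d : ℝ} (hα : α ≠ 1) (hA : 1 - α + ρ * d ^ 2 * K ≠ 0) (γ : ℝ) :
    tauLow α T K ρ d γ = ρ * d ^ 4 * T / (1 - α + ρ * d ^ 2 * K) *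
      (α * γ * (1 - α * γ) / (1 - α * γ + (1 - muLow α T K ρ d) * (α * γ))) := by
  have h1α : 1 - α ≠ 0 := sub_ne_zero.2 hα.symm
  rw [one_sub_muLow hA, tauLow]
  field_simp
  ring

theorem isMaxOn_tauLow {α T K ρ d : ℝ} (hα : α ∈ Ioo 0 1) (hT : 0 ≤ T) (hK : 0 ≤ K)
    (hρ : 0 ≤ ρ) :
    IsMaxOn (tauLow α T K ρ d) (Icc 0 (1 / α)) (gammaStarLow α T K ρ d) := by
  obtain ⟨hα0, hα1⟩ := hα
  have hA : 0 < 1 - α + ρ * d ^ 2 * K := by nlinarith [mul_nonneg hρ (sq_nonneg d)]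
  have hμ : 0 < 1 - muLow α T K ρ d := by
    rw [one_sub_muLow hA.ne']
    have : 0 < 1 + ρ * d ^ 2 * T := by positivity
    exact div_pos (mul_pos (by linarith) this) hA
  set s := √(1 - muLow α T K ρ d) with hs_def
  have hs : 0 < s := Real.sqrt_pos.2 hμ
  have hτ : tauLow α T K ρ d = (fun y => ρ * d ^ 4 * T / (1 - α + ρ * d ^ 2 * K) * y) ∘
      (fun x : ℝ => x * (1 - x) / (1 - x + s ^ 2 * x)) ∘ (fun γ => α * γ) := by
    funext γ
    simp only [Function.comp_apply, Real.sq_sqrt hμ.le, s]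
    exact tauLow_eq hα1.ne hA.ne' γ
  have hmaps : MapsTo (fun γ => α * γ) (Icc 0 (1 / α)) (Icc 0 1) := fun γ hγ =>
    ⟨by nlinarith [hγ.1], by nlinarith [hγ.2, mul_one_div_cancel hα0.ne']⟩
  have hγ : α * gammaStarLow α T K ρ d = 1 / (1 + s) := by
    rw [gammaStarLow_eq, ← hs_def]
    field_simp
  rw [hτ]
  exact ((isMaxOn_mul_one_sub_div hs).comp_mono
    (monotone_mul_left_of_nonneg (by positivity))).comp_mapsTo hmaps hγ

theorem gammaStarLow_mem_Icc {α : ℝ} (hα : 0 < α) (T K ρ d : ℝ) :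
    gammaStarLow α T K ρ d ∈ Icc 0 (1 / α) := by
  have hs := Real.sqrt_nonneg (1 - muLow α T K ρ d)
  rw [gammaStarLow_eq]
  exact ⟨by positivity,
    one_div_le_one_div_of_le hα (le_mul_of_one_le_right hα.le (by linarith))⟩

theorem tauLow_isMaxOn_gammaStar_general (α T K ρ d : ℝ) (hα : α ∈ Set.Ioo (0 : ℝ) 1)
    (hT : 0 < T) (hK : 1 ≤ K) (hρ : 0 < ρ) :
    gammaStarLow α T K ρ d ∈ Set.Icc 0 (1 / α) ∧
    ∀ γ ∈ Set.Icc (0 : ℝ) (1 / α),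
      tauLow α T K ρ d γ ≤ tauLow α T K ρ d (gammaStarLow α T K ρ d) :=
  ⟨gammaStarLow_mem_Icc hα.1 T K ρ d,
    isMaxOn_iff.1 (isMaxOn_tauLow hα hT.le (by linarith) hρ.le)⟩

/-- For `K ≤ αT`, `τ(γ)` attains its maximum over `γ ∈ [0, 1/α]` at
`γ* = 1/(α(1 + √(1 - μ₁)))` with `μ₁ = ρd²(K - (1-α)T)/(1-α+ρd²K)`. -/
theorem tauLow_isMaxOn_gammaStar (α T K ρ d : ℝ) (hα : α ∈ Set.Ioo (0 : ℝ) 1)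
    (hT : 0 < T) (hK : 1 ≤ K) (hρ : 0 < ρ) (hd : 0 < d) (hKT : K ≤ α * T) :
    gammaStarLow α T K ρ d ∈ Set.Icc 0 (1 / α) ∧
    ∀ γ ∈ Set.Icc (0 : ℝ) (1 / α),
      tauLow α T K ρ d γ ≤ tauLow α T K ρ d (gammaStarLow α T K ρ d) :=
  tauLow_isMaxOn_gammaStar_general α T K ρ d hα hT hK hρ
end

section
/- For fixed α ∈ (1/2, 1), K ≥ 1, ρ > 0, d > 0, the function γ ↦ τ(γ) = (γ γ' ρ² d⁴ K) / (γ γ' ρ² d⁴ K (K - αT) + ρ d² K (γ + γ') + 1), with γ' = (1-αγ)/(1-α) and K > αT, attains its maximum over γ ∈ [0, 1/α] at γ* = 1/(α(1 + √(1 - μ₂))) where μ₂ = ρ d² (2α - 1) K / (α (1 - α + ρ d² K)). -/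
/-- Effective SNR factor `τ(γ)` in the case `K > αT`, with `γ' = (1-αγ)/(1-α)`. -/
noncomputable def tauHigh (α T K ρ d γ : ℝ) : ℝ :=
  (γ * ((1 - α * γ) / (1 - α)) * ρ ^ 2 * d ^ 4 * K) /
    (γ * ((1 - α * γ) / (1 - α)) * ρ ^ 2 * d ^ 4 * K * (K - α * T) +
      ρ * d ^ 2 * K * (γ + (1 - α * γ) / (1 - α)) + 1)

/-- Optimal training power coefficient for `K > αT`. -/
noncomputable def gammaStarHigh (α K ρ d : ℝ) : ℝ :=
  1 / (α * (1 + Real.sqrt (1 - ρ * d ^ 2 * (2 * α - 1) * K / (α * (1 - α + ρ * d ^ 2 * K)))))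

private lemma tau_le_aux (α T K ρ d σ : ℝ) (hα2 : 1/2 < α) (hα1 : α < 1)
    (hK : 1 ≤ K) (hρ : 0 < ρ) (hd : 0 < d) (hKT : α * T < K)
    (hσ0 : 0 ≤ σ) (hσ1 : σ ≤ 1/α)
    (hq : α * (ρ * d ^ 2 * (2 * α - 1) * K) * σ ^ 2
        - 2 * α * (1 - α + ρ * d ^ 2 * K) * σ + (1 - α + ρ * d ^ 2 * K) = 0)
    (γ : ℝ) (hγ : γ ∈ Set.Icc (0:ℝ) (1/α)) :
    tauHigh α T K ρ d γ ≤ tauHigh α T K ρ d σ := by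
  obtain ⟨hγ0, hγ1⟩ := hγ
  have hα0 : 0 < α := by linarith
  have hβ : 0 < 1 - α := by linarith
  have hβ' : (1 - α) ≠ 0 := ne_of_gt hβ
  have hs : 0 < ρ * d ^ 2 := by positivity
  have hK0 : 0 < K := by linarith
  have hc : 0 < K - α * T := by linarith
  -- nonnegativity of the numerator core
  have hx : ∀ δ : ℝ, 0 ≤ δ → δ ≤ 1/α → 0 ≤ δ * (1 - α * δ) := by
    intro δ h0 h1
    have h2 : δ * α ≤ 1 := by
      rw [← le_div_iff₀ hα0]; simpa using h1
    nlinarith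
  -- positivity of the "M" part
  have hM : ∀ δ : ℝ, 0 ≤ δ → δ ≤ 1/α →
      0 < ρ * d ^ 2 * K * (1 + (1 - 2*α) * δ) + (1 - α) := by
    intro δ h0 h1
    have h3 : (2*α - 1) * δ ≤ (2*α - 1) * (1/α) :=
      mul_le_mul_of_nonneg_left h1 (by linarith)
    have h4 : (2*α - 1) / α < 1 := by rw [div_lt_one hα0]; linarith
    have h5 : 0 < 1 + (1 - 2*α) * δ := by
      have : (2*α-1) * (1/α) = (2*α-1)/α := by ring
      nlinarith
    nlinarith [mul_pos (mul_pos hs hK0) h5]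
  -- positivity of the clean denominator
  have hy : ∀ δ : ℝ, 0 ≤ δ → δ ≤ 1/α →
      0 < δ * (1 - α * δ) * (ρ^2 * d^4 * K) * (K - α * T)
        + (ρ * d ^ 2 * K * (1 + (1 - 2*α) * δ) + (1 - α)) := by
    intro δ h0 h1
    have h6 : 0 ≤ δ * (1 - α * δ) * (ρ^2 * d^4 * K) * (K - α * T) :=
      mul_nonneg (mul_nonneg (hx δ h0 h1) (by positivity)) hc.le
    have h7 := hM δ h0 h1
    linarith
  -- rewrite tauHigh into a division-free-inside form
  have htau : ∀ δ : ℝ, 0 ≤ δ → δ ≤ 1/α → tauHigh α T K ρ d δ =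
      (δ * (1 - α * δ) * (ρ^2 * d^4 * K)) /
      (δ * (1 - α * δ) * (ρ^2 * d^4 * K) * (K - α * T)
        + (ρ * d ^ 2 * K * (1 + (1 - 2*α) * δ) + (1 - α))) := by
    intro δ h0 h1
    have hden : δ * ((1 - α * δ) / (1 - α)) * ρ ^ 2 * d ^ 4 * K * (K - α * T) +
        ρ * d ^ 2 * K * (δ + (1 - α * δ) / (1 - α)) + 1 =
        (δ * (1 - α * δ) * (ρ^2 * d^4 * K) * (K - α * T)
          + (ρ * d ^ 2 * K * (1 + (1 - 2*α) * δ) + (1 - α))) / (1 - α) := by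
      field_simp
      ring
    have hnum : δ * ((1 - α * δ) / (1 - α)) * ρ ^ 2 * d ^ 4 * K =
        (δ * (1 - α * δ) * (ρ^2 * d^4 * K)) / (1 - α) := by
      field_simp
    unfold tauHigh
    rw [hden, hnum, div_div_div_cancel_right₀]
    exact hβ'
  rw [htau γ hγ0 hγ1, htau σ hσ0 hσ1,
    div_le_div_iff₀ (hy γ hγ0 hγ1) (hy σ hσ0 hσ1)]
  -- key factorization
  have keyeq : σ * (1 - α * σ) * (ρ^2 * d^4 * K)
        * (ρ * d ^ 2 * K * (1 + (1 - 2*α) * γ) + (1 - α))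
      - γ * (1 - α * γ) * (ρ^2 * d^4 * K)
        * (ρ * d ^ 2 * K * (1 + (1 - 2*α) * σ) + (1 - α))
      = (ρ^2 * d^4 * K) * α * (σ - γ)^2
        * (ρ * d ^ 2 * K * (1 + (1 - 2*α) * σ) + (1 - α)) := by
    linear_combination (ρ^2 * d^4 * K * (σ - γ)) * hq
  have key2 : 0 ≤ σ * (1 - α * σ) * (ρ^2 * d^4 * K)
        * (ρ * d ^ 2 * K * (1 + (1 - 2*α) * γ) + (1 - α))
      - γ * (1 - α * γ) * (ρ^2 * d^4 * K)
        * (ρ * d ^ 2 * K * (1 + (1 - 2*α) * σ) + (1 - α)) := by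
    rw [keyeq]
    have := hM σ hσ0 hσ1
    have : (0:ℝ) ≤ (ρ^2 * d^4 * K) * α * (σ - γ)^2 :=
      mul_nonneg (mul_nonneg (by positivity) hα0.le) (sq_nonneg _)
    nlinarith [hM σ hσ0 hσ1, sq_nonneg (σ - γ)]
  nlinarith [key2]

/-- For `K > αT` and `α ∈ (1/2, 1)`, `τ(γ)` attains its maximum over `γ ∈ [0, 1/α]` at
`γ* = 1/(α(1 + √(1 - μ₂)))` with `μ₂ = ρd²(2α-1)K/(α(1-α+ρd²K))`. -/
theorem tauHigh_isMaxOn_gammaStar (α T K ρ d : ℝ) (hα : α ∈ Set.Ioo (1 / 2 : ℝ) 1)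
    (hK : 1 ≤ K) (hρ : 0 < ρ) (hd : 0 < d) (hKT : α * T < K) :
    gammaStarHigh α K ρ d ∈ Set.Icc 0 (1 / α) ∧
    ∀ γ ∈ Set.Icc (0 : ℝ) (1 / α),
      tauHigh α T K ρ d γ ≤ tauHigh α T K ρ d (gammaStarHigh α K ρ d) := by
  obtain ⟨hα2, hα1⟩ := hα
  have hα0 : 0 < α := by linarith
  have hβ : 0 < 1 - α := by linarith
  have hs : 0 < ρ * d ^ 2 := by positivity
  have hK0 : 0 < K := by linarith
  have hA : 0 < 1 - α + ρ * d ^ 2 * K := by nlinarith [mul_pos hs hK0]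
  have hAB : ρ * d ^ 2 * (2 * α - 1) * K < α * (1 - α + ρ * d ^ 2 * K) := by
    nlinarith [mul_pos hβ (add_pos hα0 (mul_pos hs hK0))]
  have harg : 0 ≤ 1 - ρ * d ^ 2 * (2 * α - 1) * K / (α * (1 - α + ρ * d ^ 2 * K)) := by
    rw [sub_nonneg, div_le_one (by positivity)]
    linarith
  set t : ℝ := Real.sqrt (1 - ρ * d ^ 2 * (2 * α - 1) * K / (α * (1 - α + ρ * d ^ 2 * K)))
    with ht_def
  have ht0 : 0 ≤ t := Real.sqrt_nonneg _
  have ht2 : t ^ 2 = 1 - ρ * d ^ 2 * (2 * α - 1) * K / (α * (1 - α + ρ * d ^ 2 * K)) :=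
    Real.sq_sqrt harg
  have ht2' : α * (1 - α + ρ * d ^ 2 * K) * t ^ 2
      = α * (1 - α + ρ * d ^ 2 * K) - ρ * d ^ 2 * (2 * α - 1) * K := by
    rw [ht2]
    field_simp
  have hσdef : gammaStarHigh α K ρ d = 1 / (α * (1 + t)) := by
    rw [gammaStarHigh, ht_def]
  have h1t : 0 < α * (1 + t) := by nlinarith
  have hσ0 : 0 ≤ gammaStarHigh α K ρ d := by
    rw [hσdef]; positivity
  have hσ1 : gammaStarHigh α K ρ d ≤ 1 / α := by
    rw [hσdef]
    apply one_div_le_one_div_of_le hα0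
    nlinarith
  have hq : α * (ρ * d ^ 2 * (2 * α - 1) * K) * (gammaStarHigh α K ρ d) ^ 2
      - 2 * α * (1 - α + ρ * d ^ 2 * K) * (gammaStarHigh α K ρ d)
      + (1 - α + ρ * d ^ 2 * K) = 0 := by
    rw [hσdef]
    have h1t' : α * (1 + t) ≠ 0 := ne_of_gt h1t
    field_simp
    nlinarith [ht2']
  refine ⟨⟨hσ0, hσ1⟩, fun γ hγ => ?_⟩
  exact tau_le_aux α T K ρ d (gammaStarHigh α K ρ d) hα2 hα1 hK hρ hd hKT hσ0 hσ1 hq γ hγ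
end

section
/- With γ⁻¹ = α(1 + √(1-μ₁)) and γ'⁻¹ = (1-α)(1/√(1-μ₁) + 1), where μ₁ = ρd²(K - (1-α)T)/(1-α+ρd²K), the quantity τK = αρ²d⁴KT / (ρd²(γ⁻¹K + αγ'⁻¹T) + γ⁻¹γ'⁻¹) simplifies to τK = ρ²d⁴KT / ((1-α)(√(1+ρd²T) + √(1 + ρd²K/(1-α)))²). -/
/-! With `A = √(1 + ρd²T)` and `B = √(1 + ρd²K/(1-α))` one has `1 - μ₁ = A² / B²`, so
`γ⁻¹ = α(A + B)/B` and `γ'⁻¹ = (1-α)(A + B)/A`. Substituting `ρd²T = A² - 1` and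
`ρd²K = (1-α)(B² - 1)`, the denominator of `τK` collapses to `α(1-α)(A + B)²`. -/
lemma sqrt_one_sub_mu₁_eq_div {α r K T : ℝ} (hα : α < 1) (hr : 0 ≤ r) (hK : 0 ≤ K)
    (hT : 0 ≤ T) :
    √(1 - r * (K - (1 - α) * T) / (1 - α + r * K)) = √(1 + r * T) / √(1 + r * K / (1 - α)) := by
  have h1α : 0 < 1 - α := by linarith
  rw [← Real.sqrt_div (by positivity)]
  congr 1
  field_simp
  ring

lemma tau_denominator_eq {α r K T A B : ℝ} (hA : 0 < A) (hB : 0 < B) (hα : α < 1)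
    (hAT : A ^ 2 = 1 + r * T) (hBK : B ^ 2 = 1 + r * K / (1 - α)) :
    r * (α * (1 + A / B) * K + α * ((1 - α) * (1 / (A / B) + 1)) * T) +
        α * (1 + A / B) * ((1 - α) * (1 / (A / B) + 1)) =
      α * ((1 - α) * (A + B) ^ 2) := by
  have h1α : 1 - α ≠ 0 := by linarith
  have hrT : r * T = A ^ 2 - 1 := by linarith
  have hrK : r * K = (1 - α) * (B ^ 2 - 1) := by
    rw [hBK]; field_simp; ring
  field_simp
  linear_combination α * (A + B) * (A * hrK + B * (1 - α) * hrT)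

theorem tauK_simplification_general (α T K ρ d : ℝ) (hα : α ∈ Set.Ioo (0 : ℝ) 1)
    (hT : 0 < T) (hK : 0 < K) (hρ : 0 < ρ) :
    let μ₁ := ρ * d ^ 2 * (K - (1 - α) * T) / (1 - α + ρ * d ^ 2 * K)
    let ginv := α * (1 + Real.sqrt (1 - μ₁))
    let gpinv := (1 - α) * (1 / Real.sqrt (1 - μ₁) + 1)
    α * ρ ^ 2 * d ^ 4 * K * T / (ρ * d ^ 2 * (ginv * K + α * gpinv * T) + ginv * gpinv) =
      ρ ^ 2 * d ^ 4 * K * T /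
        ((1 - α) *
          (Real.sqrt (1 + ρ * d ^ 2 * T) + Real.sqrt (1 + ρ * d ^ 2 * K / (1 - α))) ^ 2) := by
  intro μ₁ ginv gpinv
  obtain ⟨hα0, hα1⟩ := hα
  have h1α : 0 < 1 - α := by linarith
  have hr : 0 ≤ ρ * d ^ 2 := by positivity
  have hs := sqrt_one_sub_mu₁_eq_div hα1 hr hK.le hT.le
  set A := √(1 + ρ * d ^ 2 * T)
  set B := √(1 + ρ * d ^ 2 * K / (1 - α))
  have hA : 0 < A := Real.sqrt_pos.2 (by positivity)
  have hB : 0 < B := Real.sqrt_pos.2 (by positivity)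
  simp only [ginv, gpinv, μ₁, hs]
  rw [tau_denominator_eq hA hB hα1 (Real.sq_sqrt (by positivity)) (Real.sq_sqrt (by positivity))]
  field_simp

/-- With the optimal power coefficients `γ⁻¹ = α(1+√(1-μ₁))`,
`γ'⁻¹ = (1-α)(1/√(1-μ₁)+1)`, `μ₁ = ρd²(K-(1-α)T)/(1-α+ρd²K)`, the quantity
`τK = αρ²d⁴KT / (ρd²(γ⁻¹K + αγ'⁻¹T) + γ⁻¹γ'⁻¹)` equals
`ρ²d⁴KT / ((1-α)(√(1+ρd²T) + √(1+ρd²K/(1-α)))²)`. -/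
theorem tauK_simplification (α T K ρ d : ℝ) (hα : α ∈ Set.Ioo (0 : ℝ) 1)
    (hT : 0 < T) (hK : 0 < K) (hρ : 0 < ρ) (hd : 0 < d) (hKT : K ≤ α * T) :
    let μ₁ := ρ * d ^ 2 * (K - (1 - α) * T) / (1 - α + ρ * d ^ 2 * K)
    let ginv := α * (1 + Real.sqrt (1 - μ₁))
    let gpinv := (1 - α) * (1 / Real.sqrt (1 - μ₁) + 1)
    α * ρ ^ 2 * d ^ 4 * K * T / (ρ * d ^ 2 * (ginv * K + α * gpinv * T) + ginv * gpinv) =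
      ρ ^ 2 * d ^ 4 * K * T /
        ((1 - α) *
          (Real.sqrt (1 + ρ * d ^ 2 * T) + Real.sqrt (1 + ρ * d ^ 2 * K / (1 - α))) ^ 2) :=
  tauK_simplification_general α T K ρ d hα hT hK hρ
end

section
/- Let X_p be a K × m complex matrix with K ≤ m, A = diag(a₁,...,a_K) a positive diagonal matrix, and N₀ > 0. Define X̃ = A X_p (X_p† A² X_p + N₀ I_m)^{-1/2}. If X_p X_p† = R is diagonal with positive entries r₁,...,r_K, then X̃ X̃† = diag(a_k² r_k / (a_k² r_k + N₀)), i.e., X̃X̃† is diagonal with k-th entry a_k² r_k/(a_k² r_k + N₀). -/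
open Matrix
open scoped ComplexOrder

/-- With optimal pilots `X_p X_p† = diag(r)` (for `K ≤ m`), the normalized matrix
`X̃ = A X_p (X_p† A² X_p + N₀ I)^{-1/2}` satisfies
`X̃ X̃† = diag(a_k² r_k/(a_k² r_k + N₀))`. Here `S` is the inverse square root,
characterized by `S ⪰ 0` and `S S = (X_p† A² X_p + N₀ I)⁻¹`. -/
theorem pilot_normalized_gram_diagonal (K m : ℕ) (hKm : K ≤ m)
    (a r : Fin K → ℝ) (ha : ∀ k, 0 < a k) (hr : ∀ k, 0 < r k)
    (N₀ : ℝ) (hN₀ : 0 < N₀)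
    (Xp : Matrix (Fin K) (Fin m) ℂ)
    (hXp : Xp * Xpᴴ = Matrix.diagonal fun k => ((r k : ℝ) : ℂ))
    (S : Matrix (Fin m) (Fin m) ℂ) (hS : S.PosSemidef)
    (hS2 : S * S =
      (Xpᴴ * Matrix.diagonal (fun k => (((a k) ^ 2 : ℝ) : ℂ)) * Xp + ((N₀ : ℝ) : ℂ) • 1)⁻¹) :
    (Matrix.diagonal (fun k => ((a k : ℝ) : ℂ)) * Xp * S) *
        (Matrix.diagonal (fun k => ((a k : ℝ) : ℂ)) * Xp * S)ᴴ =
      Matrix.diagonal fun k => (((a k) ^ 2 * r k / ((a k) ^ 2 * r k + N₀) : ℝ) : ℂ) := by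
  set Da : Matrix (Fin K) (Fin K) ℂ := Matrix.diagonal (fun k => ((a k : ℝ) : ℂ)) with hDa
  set D2 : Matrix (Fin K) (Fin K) ℂ := Matrix.diagonal (fun k => (((a k) ^ 2 : ℝ) : ℂ)) with hD2
  set M : Matrix (Fin m) (Fin m) ℂ := Xpᴴ * D2 * Xp + ((N₀ : ℝ) : ℂ) • 1 with hM
  have hne : ∀ k, ((a k) ^ 2 * r k + N₀ : ℝ) ≠ 0 := fun k =>
    ne_of_gt (add_pos_of_nonneg_of_pos (mul_nonneg (sq_nonneg _) (hr k).le) hN₀)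
  have hneC : ∀ k, (((a k) ^ 2 * r k + N₀ : ℝ) : ℂ) ≠ 0 := fun k => by
    exact_mod_cast hne k
  -- M is positive definite, hence invertible
  have hD2eq : D2 = Daᴴ * Da := by
    rw [hDa, hD2, Matrix.diagonal_conjTranspose, Matrix.diagonal_mul_diagonal]
    refine congrArg Matrix.diagonal (funext fun k => ?_)
    simp [pow_two, ← Complex.ofReal_mul]
  have hPSD : (Xpᴴ * D2 * Xp).PosSemidef := by
    have h : Xpᴴ * D2 * Xp = (Da * Xp)ᴴ * (Da * Xp) := by
      rw [Matrix.conjTranspose_mul, hD2eq]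
      simp only [Matrix.mul_assoc]
    rw [h]
    exact Matrix.posSemidef_conjTranspose_mul_self _
  have hPD : (((N₀ : ℝ) : ℂ) • (1 : Matrix (Fin m) (Fin m) ℂ)).PosDef := by
    rw [Matrix.smul_one_eq_diagonal]
    exact Matrix.PosDef.diagonal (fun i => Complex.zero_lt_real.mpr hN₀)
  have hMPD : M.PosDef := Matrix.PosDef.posSemidef_add hPSD hPD
  have hMM : M * M⁻¹ = 1 :=
    Matrix.mul_nonsing_inv _ ((Matrix.isUnit_iff_isUnit_det _).mp hMPD.isUnit)
  -- explicit diagonal matrices N and its inverse E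
  set Nn : Matrix (Fin K) (Fin K) ℂ :=
    Matrix.diagonal (fun k => (((a k) ^ 2 * r k + N₀ : ℝ) : ℂ)) with hNn
  set E : Matrix (Fin K) (Fin K) ℂ :=
    Matrix.diagonal (fun k => ((((a k) ^ 2 * r k + N₀ : ℝ) : ℂ))⁻¹) with hE
  have hEN : E * Nn = 1 := by
    rw [hE, hNn, Matrix.diagonal_mul_diagonal, ← Matrix.diagonal_one]
    refine congrArg Matrix.diagonal (funext fun k => ?_)
    exact inv_mul_cancel₀ (hneC k)
  -- push-through identity : Xp * M = Nn * Xp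
  have hpush : Xp * M = Nn * Xp := by
    rw [hM, Matrix.mul_add]
    have h1 : Xp * (Xpᴴ * D2 * Xp) = (Matrix.diagonal fun k => ((r k : ℝ) : ℂ)) * D2 * Xp := by
      rw [← Matrix.mul_assoc, ← Matrix.mul_assoc, hXp]
    have h2 : Xp * (((N₀ : ℝ) : ℂ) • (1 : Matrix (Fin m) (Fin m) ℂ)) =
        (((N₀ : ℝ) : ℂ) • (1 : Matrix (Fin K) (Fin K) ℂ)) * Xp := by
      rw [Matrix.mul_smul, Matrix.mul_one, Matrix.smul_mul, Matrix.one_mul]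
    rw [h1, h2, hD2, Matrix.diagonal_mul_diagonal, Matrix.smul_one_eq_diagonal,
      ← Matrix.add_mul, Matrix.diagonal_add, hNn]
    refine congrArg (· * Xp) (congrArg Matrix.diagonal (funext fun k => ?_))
    push_cast
    ring
  have hXpMinv : Xp * M⁻¹ = E * Xp := by
    calc Xp * M⁻¹ = E * (Nn * Xp) * M⁻¹ := by
          rw [← Matrix.mul_assoc, hEN, Matrix.one_mul]
      _ = E * (Xp * M) * M⁻¹ := by rw [hpush]
      _ = E * Xp * (M * M⁻¹) := by simp only [Matrix.mul_assoc]
      _ = E * Xp := by rw [hMM, Matrix.mul_one]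
  -- main computation
  have hSh : Sᴴ = S := hS.isHermitian
  have hDah : Daᴴ = Da := by
    rw [hDa, Matrix.diagonal_conjTranspose]
    refine congrArg Matrix.diagonal (funext fun k => ?_)
    simp
  calc (Da * Xp * S) * (Da * Xp * S)ᴴ
      = Da * (Xp * (S * S) * Xpᴴ) * Da := by
        rw [Matrix.conjTranspose_mul, Matrix.conjTranspose_mul, hSh, hDah]
        simp only [Matrix.mul_assoc]
    _ = Da * (E * Xp * Xpᴴ) * Da := by
        rw [hS2, hXpMinv]
    _ = Da * (E * (Matrix.diagonal fun k => ((r k : ℝ) : ℂ))) * Da := by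
        rw [Matrix.mul_assoc E, hXp]
    _ = Matrix.diagonal fun k => (((a k) ^ 2 * r k / ((a k) ^ 2 * r k + N₀) : ℝ) : ℂ) := by
        rw [hE, hDa, Matrix.diagonal_mul_diagonal, Matrix.diagonal_mul_diagonal,
          Matrix.diagonal_mul_diagonal]
        refine congrArg Matrix.diagonal (funext fun k => ?_)
        rw [div_eq_mul_inv]
        push_cast
        ring
end
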